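/- Let n ≥ 1 and k ≥ 1. For every u ∈ 𝔽_{2^n} and c ∈ ℤ/2^kℤ, the map χ_{u,c} : 𝔽_{2^n} × ℤ/2^kℤ → ℂ defined by χ_{u,c}(x,y) = (−1)^{ι(Tr(ux)) + ι(σ(c₀,x))} · ζ^{c·y} · i^{ι(Tr(c₀x))} satisfies χ_{u,c}((x₁,y₁) ⋆ (x₂,y₂)) = χ_{u,c}(x₁,y₁) · χ_{u,c}(x₂,y₂) for all (x₁,y₁), (x₂,y₂) ∈ 𝔽_{2^n} × ℤ/2^kℤ; that is, each χ_{u,c} is a character of the group (𝔽_{2^n} × ℤ/2^kℤ, ⋆). -/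

import Mathlib

/-!
Write χ_{u,c}(x, y) = (−1)^{Tr(ux)} · ζ^{cy} · q(x) with q(x) = (−1)^{σ(c₀,x)} · i^{Tr(c₀x)}.
The first factor is additive in x, and since ζ^{2^{k−1}} = −1 the cocycle term of ⋆ contributes
(−1)^{c·Tr(x₁x₂)} to the second. For even c the factor q is trivial. For odd c, σ(1, ·) is a
quadratic form with σ(x + y) = σ(x) + σ(y) + Tr x · Tr y + Tr(xy); the factor i^{Tr x} absorbs
the term Tr x · Tr y, so q(x + y) = q(x) q(y) (−1)^{Tr(xy)}, and the two signs (−1)^{Tr(x₁x₂)}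
cancel. That Tr and σ(1, ·) take values in {0, 1} follows from x^{2^n} = x: squaring shifts
the orbit x, x², x⁴, … cyclically.
-/

noncomputable section

/-- The absolute trace Tr(x) = x + x² + x⁴ + … + x^{2^{n−1}}. -/
def Tr {F : Type} [Field F] (n : ℕ) (x : F) : F :=
  ∑ i ∈ Finset.range n, x ^ (2 ^ i)

/-- σ(c,x) = Σ_{0 ≤ i < j ≤ n−1} (cx)^{2^i} (cx)^{2^j} -/
def sig {F : Type} [Field F] (n : ℕ) (c x : F) : F :=
  ∑ j ∈ Finset.range n, ∑ i ∈ Finset.range j, (c * x) ^ (2 ^ i) * (c * x) ^ (2 ^ j)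

/-- ι(e): the integer lift of e ∈ {0,1} ⊆ F. -/
def iotaN {F : Type} [Field F] [DecidableEq F] (e : F) : ℕ :=
  if e = 1 then 1 else 0

/-- ζ = e^{2πi/2^k}. -/
def zeta (k : ℕ) : ℂ := Complex.exp (2 * Real.pi * Complex.I / 2 ^ k)

/-- c₀ ∈ {0,1} ⊆ F equals 1 if c is odd and 0 if c is even. -/
def czero {F : Type} [Field F] (k : ℕ) (c : ZMod (2 ^ k)) : F :=
  if c.val % 2 = 1 then 1 else 0

/-- The operation ⋆ on 𝔽_{2^n} × ℤ/2^kℤ: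
(x₁,y₁) ⋆ (x₂,y₂) = (x₁+x₂, y₁+y₂+2^{k−1}·ι(Tr(x₁x₂))). -/
def star {F : Type} [Field F] [DecidableEq F] (n k : ℕ)
    (p q : F × ZMod (2 ^ k)) : F × ZMod (2 ^ k) :=
  (p.1 + q.1, p.2 + q.2 +
    2 ^ (k - 1) * (if Tr n (p.1 * q.1) = 1 then 1 else 0))

/-- χ_{u,c}(x,y) = (−1)^{ι(Tr(ux)) + ι(σ(c₀,x))} · ζ^{c·y} · i^{ι(Tr(c₀x))}. -/
def chi {F : Type} [Field F] [DecidableEq F] (n k : ℕ) (u : F) (c : ZMod (2 ^ k))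
    (p : F × ZMod (2 ^ k)) : ℂ :=
  (-1 : ℂ) ^ (iotaN (Tr n (u * p.1)) + iotaN (sig n (czero k c) p.1)) *
    zeta k ^ (c * p.2).val * Complex.I ^ (iotaN (Tr n (czero k c * p.1)))

open Finset

theorem sum_range_mul_sum_range_eq_sum_lt_add_sum_diag {R : Type*} [CommSemiring R] (n : ℕ)
    (f g : ℕ → R) :
    (∑ i ∈ range n, f i) * ∑ j ∈ range n, g j =
      ∑ j ∈ range n, ∑ i ∈ range j, (f i * g j + f j * g i) + ∑ i ∈ range n, f i * g i := by
  induction n with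
  | zero => simp
  | succ m ih =>
    rw [sum_range_succ (fun j => ∑ i ∈ range j, _), sum_range_succ f, sum_range_succ g,
      sum_range_succ (fun i => f i * g i), add_mul, mul_add, mul_add, ih, sum_add_distrib,
      ← sum_mul, ← mul_sum]
    ring

theorem sum_range_succ_add_apply_zero {M : Type*} [AddCommMonoid M] (n : ℕ) (f : ℕ → M) :
    ∑ i ∈ range n, f (i + 1) + f 0 = ∑ i ∈ range n, f i + f n := by
  rw [← sum_range_succ', sum_range_succ]

theorem charP_two_of_card_eq_two_pow {F : Type} [Field F] [Fintype F] {n : ℕ}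
    (hF : Fintype.card F = 2 ^ n) : CharP F 2 := by
  have h := FiniteField.cast_card_eq_zero F
  rw [hF, Nat.cast_pow, Nat.cast_ofNat] at h
  exact (CharP.charP_iff_prime_eq_zero Nat.prime_two).2 (pow_eq_zero_iff'.mp h).1

section Field

variable {F : Type} [Field F]

theorem Tr_zero (n : ℕ) : Tr n (0 : F) = 0 := by
  simp [Tr]

theorem sig_zero_left (n : ℕ) (x : F) : sig n 0 x = 0 := by
  simp [sig]

theorem iotaN_zero [DecidableEq F] : iotaN (0 : F) = 0 := by
  simp [iotaN]

theorem natCast_iotaN [DecidableEq F] {R : Type*} [AddMonoidWithOne R] (t : F) :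
    ((iotaN t : ℕ) : R) = if t = 1 then 1 else 0 := by
  simp [iotaN, Nat.cast_ite]

end Field

section CharTwo

variable {F : Type} [Field F] [CharP F 2]

theorem IsIdempotentElem.add_of_charTwo {a b : F} (ha : IsIdempotentElem a)
    (hb : IsIdempotentElem b) : IsIdempotentElem (a + b) :=
  ha.add hb (by rw [mul_comm, CharTwo.add_self_eq_zero])

theorem Tr_add (n : ℕ) (x y : F) : Tr n (x + y) = Tr n x + Tr n y := by
  simp only [Tr, add_pow_char_pow, sum_add_distrib]

theorem isIdempotentElem_Tr {n : ℕ} {x : F} (hx : x ^ 2 ^ n = x) :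
    IsIdempotentElem (Tr n x) := by
  have hshift := sum_range_succ_add_apply_zero n fun i => x ^ 2 ^ i
  simp only [pow_zero, pow_one, hx] at hshift
  rw [IsIdempotentElem, ← sq, Tr, CharTwo.sum_sq]
  simp_rw [← pow_mul, ← pow_succ]
  exact add_right_cancel hshift

theorem sig_one_add (n : ℕ) (x y : F) :
    sig n 1 (x + y) = sig n 1 x + sig n 1 y + Tr n x * Tr n y + Tr n (x * y) := by
  rw [Tr, Tr, sum_range_mul_sum_range_eq_sum_lt_add_sum_diag, Tr]
  simp only [mul_pow]
  rw [← add_assoc, CharTwo.add_cancel_right]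
  simp only [sig, one_mul, ← sum_add_distrib, add_pow_char_pow]
  exact sum_congr rfl fun j _ => sum_congr rfl fun i _ => by ring

theorem isIdempotentElem_sig_one {n : ℕ} {x : F} (hx : x ^ 2 ^ n = x) :
    IsIdempotentElem (sig n 1 x) := by
  set a : ℕ → F := fun i => x ^ 2 ^ i with ha
  obtain ⟨P, hP⟩ : ∃ P : ℕ → F, ∀ j, P j = ∑ i ∈ range j, a i * a j := ⟨_, fun _ => rfl⟩
  have ha_sq (i : ℕ) : a i ^ 2 = a (i + 1) := by
    rw [ha, ← pow_mul, ← pow_succ]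
  have hP_sq (j : ℕ) : P j ^ 2 = P (j + 1) - a 0 * a (j + 1) := by
    rw [eq_sub_iff_add_eq, hP, hP, CharTwo.sum_sq, sum_range_succ' (fun i => a i * a (j + 1))]
    simp only [mul_pow, ha_sq]
  -- Squaring shifts `P j` to `P (j + 1)` minus its `i = 0` term; the boundary terms of the
  -- shifted sum cancel because `a n = a 0`.
  have hshift := sum_range_succ_add_apply_zero n fun j => P j - a 0 * a j
  have hP0 : P 0 = 0 := by rw [hP, sum_range_zero]
  have ha0 : a 0 = x := by simp [ha]
  have han : a n = x := hx
  have hTr : ∑ i ∈ range n, a i = Tr n x := rfl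
  have hPn : P n = Tr n x * x := by rw [hP, ← sum_mul, han, hTr]
  have hsig : sig n 1 x = ∑ j ∈ range n, P j := by simp only [sig, one_mul, hP, ha]
  rw [IsIdempotentElem, ← sq, hsig, CharTwo.sum_sq]
  simp only [hP_sq, sum_sub_distrib, ← mul_sum, hP0, ha0, han, hPn, hTr] at hshift ⊢
  linear_combination hshift

end CharTwo

section Signs

open Complex

variable {F : Type} [Field F] [CharP F 2] [DecidableEq F]

theorem neg_one_pow_iotaN_add {a b : F} (ha : IsIdempotentElem a) (hb : IsIdempotentElem b) :
    (-1 : ℂ) ^ iotaN (a + b) = (-1) ^ iotaN a * (-1) ^ iotaN b := by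
  rw [IsIdempotentElem.iff_eq_zero_or_one] at ha hb
  rcases ha with rfl | rfl <;> rcases hb with rfl | rfl <;>
    simp [iotaN, CharTwo.add_self_eq_zero]

theorem I_pow_iotaN_add {a b : F} (ha : IsIdempotentElem a) (hb : IsIdempotentElem b) :
    I ^ iotaN (a + b) = I ^ iotaN a * I ^ iotaN b * (-1) ^ iotaN (a * b) := by
  rw [IsIdempotentElem.iff_eq_zero_or_one] at ha hb
  rcases ha with rfl | rfl <;> rcases hb with rfl | rfl <;>
    simp [iotaN, CharTwo.add_self_eq_zero]

theorem neg_one_pow_sig_one_mul_I_pow_Tr_add {n : ℕ} {x y : F} (hx : x ^ 2 ^ n = x)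
    (hy : y ^ 2 ^ n = y) :
    (-1 : ℂ) ^ iotaN (sig n 1 (x + y)) * I ^ iotaN (Tr n (x + y)) * (-1) ^ iotaN (Tr n (x * y)) =
      (-1) ^ iotaN (sig n 1 x) * I ^ iotaN (Tr n x) *
        ((-1) ^ iotaN (sig n 1 y) * I ^ iotaN (Tr n y)) := by
  have hxy : (x * y) ^ 2 ^ n = x * y := by rw [mul_pow, hx, hy]
  have hTx := isIdempotentElem_Tr hx
  have hTy := isIdempotentElem_Tr hy
  have hσx := isIdempotentElem_sig_one hx
  have hσy := isIdempotentElem_sig_one hy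
  have hσ := hσx.add_of_charTwo hσy
  rw [sig_one_add, Tr_add,
    neg_one_pow_iotaN_add (hσ.add_of_charTwo (hTx.mul hTy)) (isIdempotentElem_Tr hxy),
    neg_one_pow_iotaN_add hσ (hTx.mul hTy), neg_one_pow_iotaN_add hσx hσy, I_pow_iotaN_add hTx hTy]
  have hsq (t : F) : (-1 : ℂ) ^ iotaN t * (-1) ^ iotaN t = 1 := by
    rw [← mul_pow, neg_one_mul, neg_neg, one_pow]
  linear_combination ((-1 : ℂ) ^ iotaN (sig n 1 x) * (-1) ^ iotaN (sig n 1 y) *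
    I ^ iotaN (Tr n x) * I ^ iotaN (Tr n y)) *
      ((-1) ^ iotaN (Tr n x * Tr n y) * (-1) ^ iotaN (Tr n x * Tr n y) * hsq (Tr n (x * y)) +
        hsq (Tr n x * Tr n y))

end Signs

theorem zeta_succ_pow_two_pow (k : ℕ) : zeta (k + 1) ^ 2 ^ k = -1 := by
  rw [zeta, ← Complex.exp_nat_mul, ← Complex.exp_pi_mul_I]
  congr 1
  push_cast
  field_simp
  ring

section Zeta

variable {k : ℕ}

theorem zeta_pow_eq_stdAddChar (N : ℕ) : zeta k ^ N = ZMod.stdAddChar (N : ZMod (2 ^ k)) := by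
  rw [ZMod.stdAddChar_apply, ZMod.toCircle_natCast, zeta, ← Complex.exp_nat_mul]
  congr 1
  push_cast
  ring

theorem zeta_pow_val (z : ZMod (2 ^ k)) : zeta k ^ z.val = ZMod.stdAddChar z := by
  rw [zeta_pow_eq_stdAddChar, ZMod.natCast_zmod_val]

theorem zeta_pow_two_pow_pred_mul_val (c : ZMod (2 ^ k)) :
    zeta k ^ (2 ^ (k - 1) * c.val) = (-1) ^ c.val := by
  cases k with
  | zero =>
    have hc : c.val = 0 := Nat.lt_one_iff.mp (ZMod.val_lt c)
    simp [hc]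
  | succ k => rw [Nat.add_sub_cancel, pow_mul, zeta_succ_pow_two_pow]

theorem zeta_pow_val_mul_add_add_two_pow_pred_mul (c y₁ y₂ : ZMod (2 ^ k)) (m : ℕ) :
    zeta k ^ (c * (y₁ + y₂ + 2 ^ (k - 1) * m)).val =
      zeta k ^ (c * y₁).val * zeta k ^ (c * y₂).val * (-1) ^ (c.val * m) := by
  have hcast : c * (2 ^ (k - 1) * m) = ((2 ^ (k - 1) * c.val * m : ℕ) : ZMod (2 ^ k)) := by
    push_cast [ZMod.natCast_zmod_val]
    ring
  simp only [zeta_pow_val, mul_add, AddChar.map_add_eq_mul, hcast, ← zeta_pow_eq_stdAddChar]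
  rw [pow_mul, zeta_pow_two_pow_pred_mul_val, pow_mul]

end Zeta

theorem stmt3_general {F : Type} [Field F] [Fintype F] [DecidableEq F] (n k : ℕ)
    (hF : Fintype.card F = 2 ^ n)
    (u : F) (c : ZMod (2 ^ k)) :
    ∀ p q : F × ZMod (2 ^ k),
      chi n k u c (star n k p q) = chi n k u c p * chi n k u c q := by
  have := charP_two_of_card_eq_two_pow hF
  have hfix (x : F) : x ^ 2 ^ n = x := hF ▸ FiniteField.pow_card x
  rintro ⟨x₁, y₁⟩ ⟨x₂, y₂⟩
  have hlin : (-1 : ℂ) ^ iotaN (Tr n (u * (x₁ + x₂))) =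
      (-1) ^ iotaN (Tr n (u * x₁)) * (-1) ^ iotaN (Tr n (u * x₂)) := by
    rw [mul_add, Tr_add,
      neg_one_pow_iotaN_add (isIdempotentElem_Tr (hfix _)) (isIdempotentElem_Tr (hfix _))]
  simp only [chi, _root_.star, ← natCast_iotaN, zeta_pow_val_mul_add_add_two_pow_pred_mul,
    pow_add, hlin, pow_mul]
  rcases Nat.even_or_odd c.val with hc | hc
  · have hc₀ : czero k c = (0 : F) := by simp [czero, Nat.even_iff.mp hc]
    simp only [hc₀, hc.neg_one_pow, zero_mul, sig_zero_left, Tr_zero, iotaN_zero]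
    ring
  · have hc₀ : czero k c = (1 : F) := by simp [czero, Nat.odd_iff.mp hc]
    simp only [hc₀, hc.neg_one_pow, one_mul]
    linear_combination (-1 : ℂ) ^ iotaN (Tr n (u * x₁)) * (-1) ^ iotaN (Tr n (u * x₂)) *
      zeta k ^ (c * y₁).val * zeta k ^ (c * y₂).val *
        neg_one_pow_sig_one_mul_I_pow_Tr_add (hfix x₁) (hfix x₂)

/-- Each χ_{u,c} is a character of the group (𝔽_{2^n} × ℤ/2^kℤ, ⋆). -/
theorem stmt3 {F : Type} [Field F] [Fintype F] [DecidableEq F] (n k : ℕ)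
    (hn : 1 ≤ n) (hk : 1 ≤ k) (hF : Fintype.card F = 2 ^ n)
    (u : F) (c : ZMod (2 ^ k)) :
    ∀ p q : F × ZMod (2 ^ k),
      chi n k u c (star n k p q) = chi n k u c p * chi n k u c q :=
  stmt3_general n k hF u c
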